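/- Let G be a finite simple graph with no even cycles. Then any two matchings of G having the same vertex set are equal; consequently, |M(G,k)| = m_k(G) for every k ≥ 0. -/

import Mathlib

set_option linter.unusedSectionVars false
set_option linter.unusedVariables false
set_option maxHeartbeats 1000000



variable {V : Type} [Fintype V] [DecidableEq V]

/-- `M` is a matching of `G`: a finset of edges of `G` that pairwise share no vertex. -/
def IsGMatching (G : SimpleGraph V) (M : Finset (Sym2 V)) : Prop :=
  (M : Set (Sym2 V)) ⊆ G.edgeSet ∧
    (M : Set (Sym2 V)).Pairwise fun e f => ∀ v : V, ¬ (v ∈ e ∧ v ∈ f)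

/-- The set of vertices covered by a finset of edges. -/
def edgeVerts (F : Finset (Sym2 V)) : Set V := {v | ∃ e ∈ F, v ∈ e}

/-- `m_k(G)`: the number of `k`-matchings of `G`. -/
noncomputable def mCount (G : SimpleGraph V) (k : ℕ) : ℕ :=
  Nat.card {M : Finset (Sym2 V) // IsGMatching G M ∧ M.card = k}

/-- `|M(G,k)|`: the number of vertex subsets that are the vertex set of some `k`-matching. -/
noncomputable def MCount (G : SimpleGraph V) (k : ℕ) : ℕ :=
  Nat.card {W : Set V // ∃ M : Finset (Sym2 V), IsGMatching G M ∧ M.card = k ∧ edgeVerts M = W}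

lemma mem_edgeVerts {F : Finset (Sym2 V)} {v : V} : v ∈ edgeVerts F ↔ ∃ e ∈ F, v ∈ e := Iff.rfl

lemma matching_unique {G : SimpleGraph V} {M : Finset (Sym2 V)} (h : IsGMatching G M)
    {e f : Sym2 V} (he : e ∈ M) (hf : f ∈ M) {v : V} (hv : v ∈ e) (hv' : v ∈ f) : e = f := by
  by_contra hne
  exact h.2 (Finset.mem_coe.2 he) (Finset.mem_coe.2 hf) hne v ⟨hv, hv'⟩

open Classical in
noncomputable def partner (M : Finset (Sym2 V)) (v : V) : V :=
  if h : ∃ e ∈ M, v ∈ e then Sym2.Mem.other h.choose_spec.2 else v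

lemma partner_spec {M : Finset (Sym2 V)} {v : V} (h : v ∈ edgeVerts M) :
    s(v, partner M v) ∈ M := by
  rw [mem_edgeVerts] at h
  rw [partner, dif_pos h, Sym2.other_spec h.choose_spec.2]
  exact h.choose_spec.1

lemma partner_mem {M : Finset (Sym2 V)} {v : V} (h : v ∈ edgeVerts M) :
    partner M v ∈ edgeVerts M :=
  ⟨_, partner_spec h, Sym2.mem_mk_right _ _⟩

def walkOf (G : SimpleGraph V) (f : ℕ → V) (h : ∀ n, G.Adj (f n) (f (n + 1))) :
    (s L : ℕ) → G.Walk (f s) (f (s + L))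
  | _, 0 => SimpleGraph.Walk.nil
  | s, L + 1 =>
      (SimpleGraph.Walk.cons (h s) (walkOf G f h (s + 1) L)).copy rfl (congrArg f (by omega))

lemma walkOf_length (G : SimpleGraph V) (f : ℕ → V) (h : ∀ n, G.Adj (f n) (f (n + 1)))
    (s L : ℕ) : (walkOf G f h s L).length = L := by
  induction L generalizing s with
  | zero => rfl
  | succ L ih => simp [walkOf, ih]

lemma walkOf_support (G : SimpleGraph V) (f : ℕ → V) (h : ∀ n, G.Adj (f n) (f (n + 1)))
    (s L : ℕ) :
    (walkOf G f h s L).support = (List.range (L + 1)).map (fun k => f (s + k)) := by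
  induction L generalizing s with
  | zero => simp [walkOf, List.range_succ]
  | succ L ih =>
    rw [walkOf, SimpleGraph.Walk.support_copy, SimpleGraph.Walk.support_cons, ih]
    rw [List.range_succ_eq_map (n := L + 1), List.map_cons, List.map_map]
    refine congrArg₂ _ (by simp) ?_
    exact List.map_congr_left fun k _ => congrArg f (by simp [Function.comp]; omega)

lemma walkOf_edges (G : SimpleGraph V) (f : ℕ → V) (h : ∀ n, G.Adj (f n) (f (n + 1)))
    (s L : ℕ) :
    (walkOf G f h s L).edges = (List.range L).map (fun k => s(f (s + k), f (s + k + 1))) := by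
  induction L generalizing s with
  | zero => simp [walkOf]
  | succ L ih =>
    rw [walkOf, SimpleGraph.Walk.edges_copy, SimpleGraph.Walk.edges_cons, ih]
    rw [List.range_succ_eq_map (n := L), List.map_cons, List.map_map]
    refine congrArg₂ _ (by simp) ?_
    exact List.map_congr_left fun k _ => by
      simp only [Function.comp]
      exact congrArg₂ (fun a b => s(f a, f b)) (by omega) (by omega)

lemma no_disjoint (G : SimpleGraph V)
    (hG : ∀ (v : V) (w : G.Walk v v), w.IsCycle → ¬ Even w.length)
    {M₁ M₂ : Finset (Sym2 V)} (h₁ : IsGMatching G M₁) (h₂ : IsGMatching G M₂)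
    (hdisj : ∀ e, e ∈ M₁ → e ∉ M₂) (hev : edgeVerts M₁ = edgeVerts M₂) : M₁ = ∅ := by
  classical
  by_contra hne
  obtain ⟨e₀, he₀⟩ := Finset.nonempty_iff_ne_empty.2 hne
  induction e₀ using Sym2.ind with
  | _ a b =>
  have ha : a ∈ edgeVerts M₁ := ⟨_, he₀, Sym2.mem_mk_left _ _⟩
  set f : ℕ → V := fun n =>
    Nat.rec a (fun n v => if Even n then partner M₁ v else partner M₂ v) n with hfdef
  have hfs : ∀ n, f (n + 1) = if Even n then partner M₁ (f n) else partner M₂ (f n) :=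
    fun n => rfl
  have hS : ∀ n, f n ∈ edgeVerts M₁ := by
    intro n
    induction n with
    | zero => exact ha
    | succ n ih =>
      rw [hfs]
      split
      · exact partner_mem ih
      · rw [hev]
        exact partner_mem (hev ▸ ih)
  have hE1 : ∀ n, Even n → s(f n, f (n + 1)) ∈ M₁ := fun n hn => by
    rw [hfs, if_pos hn]; exact partner_spec (hS n)
  have hE2 : ∀ n, ¬ Even n → s(f n, f (n + 1)) ∈ M₂ := fun n hn => by
    rw [hfs, if_neg hn]; exact partner_spec (hev ▸ hS n)
  have hadj : ∀ n, G.Adj (f n) (f (n + 1)) := fun n => by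
    by_cases hn : Even n
    · exact G.mem_edgeSet.1 (h₁.1 (hE1 n hn))
    · exact G.mem_edgeSet.1 (h₂.1 (hE2 n hn))
  have hne1 : ∀ n, f (n + 1) ≠ f n := fun n => (hadj n).ne'
  have hnb : ∀ n, f (n + 2) ≠ f n := by
    intro n heq
    by_cases hn : Even n
    · have e1 := hE1 n hn
      have e2 := hE2 (n + 1) (by simp [Nat.even_add_one, hn])
      rw [heq, Sym2.eq_swap] at e2
      exact hdisj _ e1 e2
    · have e1 := hE2 n hn
      have e2 := hE1 (n + 1) (Nat.even_add_one.2 hn)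
      rw [heq, Sym2.eq_swap] at e2
      exact hdisj _ e2 e1
  obtain ⟨x, y, hxy, hfxy⟩ := Finite.exists_ne_map_eq_of_infinite f
  have hPex : ∃ j, ∃ i, i < j ∧ f i = f j := by
    rcases hxy.lt_or_gt with h | h
    exacts [⟨y, x, h, hfxy⟩, ⟨x, y, h, hfxy.symm⟩]
  set j := Nat.find hPex with hjdef
  obtain ⟨i, hij, hfij⟩ := Nat.find_spec hPex
  have hinj : ∀ k l, k < j → l < j → f k = f l → k = l := by
    intro k l hk hl hkl
    by_contra hne'
    rcases Ne.lt_or_gt hne' with h | h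
    · exact Nat.find_min hPex hl ⟨k, h, hkl⟩
    · exact Nat.find_min hPex hk ⟨l, h, hkl.symm⟩
  have hL1 : j ≠ i + 1 := by
    intro h
    exact hne1 i (h ▸ hfij.symm)
  have hL2 : j ≠ i + 2 := by
    intro h
    exact hnb i (h ▸ hfij.symm)
  have hLge : i + 3 ≤ j := by omega
  set L := j - i with hLdef
  -- the helper about where f can collide
  have hfe : ∀ c d, c ≤ j → d ≤ j → f c = f d →
      c = d ∨ (c = i ∧ d = j) ∨ (c = j ∧ d = i) := by
    intro c d hcj hdj hcd
    rcases eq_or_lt_of_le hcj with hc | hc <;> rcases eq_or_lt_of_le hdj with hd | hd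
    · left; omega
    · refine Or.inr (Or.inr ⟨hc, ?_⟩)
      have hdi : f d = f i := by rw [← hcd, hc, ← hfij]
      exact hinj d i hd hij hdi
    · refine Or.inr (Or.inl ⟨?_, hd⟩)
      have hci : f c = f i := by rw [hcd, hd, ← hfij]
      exact hinj c i hc hij hci
    · exact Or.inl (hinj c d hc hd hcd)
  -- parity: L is even
  have hjm1 : j - 1 + 1 = j := by omega
  have hmemA : f i ∈ s(f i, f (i + 1)) := Sym2.mem_mk_left _ _
  have hmemB : f i ∈ s(f (j - 1), f (j - 1 + 1)) := by
    rw [hjm1, ← hfij]; exact Sym2.mem_mk_right _ _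
  have hAB : s(f i, f (i + 1)) ≠ s(f (j - 1), f (j - 1 + 1)) := by
    rw [hjm1]
    intro h
    rcases Sym2.eq_iff.1 h with ⟨h1, h2⟩ | ⟨h1, h2⟩
    · exact absurd (hinj i (j - 1) (by omega) (by omega) h1) (by omega)
    · exact absurd (hinj (i + 1) (j - 1) (by omega) (by omega) h2) (by omega)
  have key1 : ∀ n, (s(f n, f (n + 1)) ∈ M₁ ↔ Even n) := by
    intro n
    constructor
    · intro h
      by_contra hn
      exact hdisj _ h (hE2 n hn)
    · exact hE1 n
  have hnotboth : ¬ (s(f i, f (i + 1)) ∈ M₁ ↔ s(f (j - 1), f (j - 1 + 1)) ∈ M₁) := by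
    intro hiff
    by_cases hA : s(f i, f (i + 1)) ∈ M₁
    · exact hAB (matching_unique h₁ hA (hiff.1 hA) hmemA hmemB)
    · have hA2 : s(f i, f (i + 1)) ∈ M₂ := hE2 i fun h => hA (hE1 i h)
      have hB2 : s(f (j - 1), f (j - 1 + 1)) ∈ M₂ :=
        hE2 (j - 1) fun h => (fun hB => hA (hiff.2 hB)) (hE1 (j - 1) h)
      exact hAB (matching_unique h₂ hA2 hB2 hmemA hmemB)
  have hpar : ¬ (Even i ↔ Even (j - 1)) := fun h =>
    hnotboth ((key1 i).trans (h.trans ((key1 (j - 1)).symm)))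
  have hLeven : Even L := by
    have h1 : ¬ (i % 2 = 0 ↔ (j - 1) % 2 = 0) := by simpa [Nat.even_iff] using hpar
    rw [hLdef, Nat.even_iff]
    omega
  -- build the cycle
  have hiLj : f (i + L) = f i := by
    rw [show i + L = j by omega, ← hfij]
  let w : G.Walk (f i) (f i) := (walkOf G f hadj i L).copy rfl hiLj
  have hwlen : w.length = L := by
    simp only [w, SimpleGraph.Walk.length_copy, walkOf_length]
  have hcyc : w.IsCycle := by
    rw [SimpleGraph.Walk.isCycle_def]
    refine ⟨(SimpleGraph.Walk.isTrail_def _).2 ?_, ?_, ?_⟩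
    · simp only [w, SimpleGraph.Walk.edges_copy, walkOf_edges]
      refine List.Nodup.map_on ?_ (List.nodup_range)
      intro k hk l hl hkl
      simp only [List.mem_range] at hk hl
      rcases Sym2.eq_iff.1 hkl with ⟨h1, h2⟩ | ⟨h1, h2⟩
      · have := hinj (i + k) (i + l) (by omega) (by omega) h1
        omega
      · rcases hfe (i + k) (i + l + 1) (by omega) (by omega) h1 with
          hc | ⟨hc1, hc2⟩ | ⟨hc1, hc2⟩
        · -- k = l + 1
          rcases hfe (i + k + 1) (i + l) (by omega) (by omega) h2 with
            hd | ⟨hd1, hd2⟩ | ⟨hd1, hd2⟩ <;> omega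
        · -- k = 0, i + l + 1 = j
          have := hinj (i + k + 1) (i + l) (by omega) (by omega) h2
          omega
        · omega
    · intro hnil
      rw [hnil] at hwlen
      simp at hwlen
      omega
    · simp only [w, SimpleGraph.Walk.support_copy, walkOf_support]
      rw [List.range_succ_eq_map, List.map_cons, List.map_map, List.tail_cons]
      refine List.Nodup.map_on ?_ (List.nodup_range)
      intro k hk l hl hkl
      simp only [List.mem_range] at hk hl
      simp only [Function.comp] at hkl
      rcases hfe (i + (k + 1)) (i + (l + 1)) (by omega) (by omega) hkl with
        hc | ⟨hc1, hc2⟩ | ⟨hc1, hc2⟩ <;> omega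
  exact hG (f i) w hcyc (by rw [hwlen]; exact hLeven)

lemma isGMatching_subset {G : SimpleGraph V} {M M' : Finset (Sym2 V)}
    (hsub : M' ⊆ M) (h : IsGMatching G M) : IsGMatching G M' :=
  ⟨fun e he => h.1 (Finset.coe_subset.2 hsub he),
   h.2.mono (Finset.coe_subset.2 hsub)⟩

lemma key_lemma (G : SimpleGraph V)
    (hG : ∀ (v : V) (w : G.Walk v v), w.IsCycle → ¬ Even w.length)
    (M₁ M₂ : Finset (Sym2 V)) (h₁ : IsGMatching G M₁) (h₂ : IsGMatching G M₂)
    (hev : edgeVerts M₁ = edgeVerts M₂) : M₁ = M₂ := by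
  classical
  have hevD : edgeVerts (M₁ \ M₂) = edgeVerts (M₂ \ M₁) := by
    have haux : ∀ (A B : Finset (Sym2 V)), IsGMatching G A → IsGMatching G B →
        edgeVerts A = edgeVerts B → edgeVerts (A \ B) ⊆ edgeVerts (B \ A) := by
      intro A B hA hB hAB v hv
      obtain ⟨e, he, hve⟩ := hv
      rw [Finset.mem_sdiff] at he
      have hvA : v ∈ edgeVerts A := ⟨e, he.1, hve⟩
      obtain ⟨g, hg, hvg⟩ := hAB ▸ hvA
      refine ⟨g, Finset.mem_sdiff.2 ⟨hg, fun hgA => ?_⟩, hvg⟩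
      exact he.2 (matching_unique hA he.1 hgA hve hvg ▸ hg)
    exact Set.Subset.antisymm (haux M₁ M₂ h₁ h₂ hev) (haux M₂ M₁ h₂ h₁ hev.symm)
  have hd1 : ∀ e, e ∈ M₁ \ M₂ → e ∉ M₂ \ M₁ := by
    intro e he1 he2
    rw [Finset.mem_sdiff] at he1 he2
    exact he1.2 he2.1
  have hd2 : ∀ e, e ∈ M₂ \ M₁ → e ∉ M₁ \ M₂ := by
    intro e he1 he2
    rw [Finset.mem_sdiff] at he1 he2
    exact he2.2 he1.1
  have hm1 : IsGMatching G (M₁ \ M₂) := isGMatching_subset (Finset.sdiff_subset) h₁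
  have hm2 : IsGMatching G (M₂ \ M₁) := isGMatching_subset (Finset.sdiff_subset) h₂
  have he1 : M₁ \ M₂ = ∅ := no_disjoint G hG hm1 hm2 hd1 hevD
  have he2 : M₂ \ M₁ = ∅ := no_disjoint G hG hm2 hm1 hd2 hevD.symm
  exact le_antisymm (Finset.sdiff_eq_empty_iff_subset.1 he1)
    (Finset.sdiff_eq_empty_iff_subset.1 he2)


/-- If `G` has no even cycles, then any two matchings of `G` with the same
vertex set are equal; consequently `|M(G,k)| = m_k(G)` for all `k`. -/
theorem stmt5 (G : SimpleGraph V)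
    (hG : ∀ (v : V) (w : G.Walk v v), w.IsCycle → ¬ Even w.length) :
    (∀ M₁ M₂ : Finset (Sym2 V), IsGMatching G M₁ → IsGMatching G M₂ →
        edgeVerts M₁ = edgeVerts M₂ → M₁ = M₂) ∧
    ∀ k : ℕ, MCount G k = mCount G k := by
  refine ⟨key_lemma G hG, fun k => ?_⟩
  refine (Nat.card_eq_of_bijective
    (fun M => (⟨edgeVerts M.1, M.1, M.2.1, M.2.2, rfl⟩ :
      {W : Set V // ∃ M : Finset (Sym2 V), IsGMatching G M ∧ M.card = k ∧ edgeVerts M = W}))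
    ⟨?_, ?_⟩).symm
  · rintro ⟨M₁, hM₁⟩ ⟨M₂, hM₂⟩ h
    have := key_lemma G hG M₁ M₂ hM₁.1 hM₂.1 (congrArg Subtype.val h)
    exact Subtype.ext this
  · rintro ⟨W, M, h1, h2, h3⟩
    exact ⟨⟨M, h1, h2⟩, Subtype.ext h3⟩
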